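/- arXiv:2010.06553 — 4 statements merged into one kernel-verified Lean document; each statement's English description precedes it below -/
import Mathlib

section
/- Let δ, ρ ∈ (0, 1/4). Define Cons(δ, ρ) ⊆ S^{n−1} as the set of unit vectors x for which there exists λ ∈ ℝ with |x_i − λ| ≤ ρ/√n for at least (1−δ)n indices i ∈ [n]. Then there exist ν, ν' > 0 and a finite set K of positive reals, all depending only on δ and ρ, such that for every x ∈ S^{n−1} \ Cons(δ, ρ) at least one of the following holds: (1) there exist κ, κ' ∈ K such that |x_i| ≤ κ/√n for at least νn indices i, and (κ+ν')/√n < |x_i| ≤ κ'/√n for at least νn indices i; or (2) there exist κ, κ' ∈ K such that κ/√n < x_i < κ'/√n for at least νn indices i, and −κ'/√n < x_i < −κ/√n for at least νn indices i. -/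
/-!
Rescale to `y = √n • x`, so that `∑ yᵢ² = n`, and sort the coordinates into shells
`j h ≤ |yᵢ| < (j + 1) h` of width `h = ρ / 2`. By Chebyshev, at most `δ n / 2` coordinates lie
beyond `M h` once `(M h)² ≥ 2 / δ`; call one of the first `M` shells heavy if it holds at least
`ε n` coordinates, where `(M + 1) ε ≤ δ / 2` makes the light shells negligible.

If two heavy shells are separated by a further shell, the lower one supplies the small coordinates
and the upper one the annulus of alternative (1). Otherwise all heavy shells lie among two
consecutive ones `j₀, j₀ + 1`, which then hold almost all coordinates. For `j₀ = 0` these fit in a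
window of radius `ρ` around `0`, contradicting non-constancy; for `j₀ ≥ 1` the band splits by sign
into two intervals of length at most `2ρ`, each holding fewer than `(1 - δ) n` coordinates, so each
holds at least `ε n`: alternative (2).
-/

open Finset

lemma abs_mul_sub_le_iff {a s μ ρ : ℝ} (hs : 0 < s) : |a * s - μ| ≤ ρ ↔ |a - μ / s| ≤ ρ / s := by
  rw [show a * s - μ = (a - μ / s) * s by field_simp, abs_mul, abs_of_pos hs, le_div_iff₀ hs]

lemma exists_subset_pair_of_forall_lt_add_two {S : Finset ℕ} {M : ℕ} (hSM : S ⊆ range M)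
    (hS : ∀ j ∈ S, ∀ k ∈ S, k < j + 2) : ∃ j₀ ≤ M, S ⊆ {j₀, j₀ + 1} := by
  rcases S.eq_empty_or_nonempty with rfl | hne
  · exact ⟨0, Nat.zero_le _, empty_subset _⟩
  refine ⟨S.min' hne, (mem_range.1 (hSM (S.min'_mem hne))).le, fun j hj => ?_⟩
  have := S.min'_le j hj
  have := hS _ (S.min'_mem hne) j hj
  rw [mem_insert, mem_singleton]
  omega

lemma exists_nat_le_mul_sq (c : ℝ) {h : ℝ} (hh : 0 < h) : ∃ M : ℕ, c ≤ (M * h) ^ 2 := by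
  obtain ⟨M, hM⟩ := exists_nat_ge (max c 1 / h)
  rw [div_le_iff₀ hh] at hM
  exact ⟨M, by nlinarith [le_max_left c 1, le_max_right c 1]⟩

noncomputable def levels (h : ℝ) (N : ℕ) : Finset ℝ := (Icc 1 N).image fun k : ℕ => (k : ℝ) * h

lemma pos_of_mem_levels {h κ : ℝ} {N : ℕ} (hh : 0 < h) (hκ : κ ∈ levels h N) : 0 < κ := by
  obtain ⟨k, hk, rfl⟩ := mem_image.1 hκ
  have : (1 : ℝ) ≤ k := by exact_mod_cast (mem_Icc.1 hk).1
  positivity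

section Counting

variable {ι : Type*} [Fintype ι]

lemma card_le_abs_mul_sq_le_sum_sq (y : ι → ℝ) {T : ℝ} (hT : 0 ≤ T) :
    (#{i | T ≤ |y i|} : ℝ) * T ^ 2 ≤ ∑ i, y i ^ 2 := by
  calc (#{i | T ≤ |y i|} : ℝ) * T ^ 2 = #{i | T ≤ |y i|} • T ^ 2 := (nsmul_eq_mul _ _).symm
    _ ≤ ∑ i ∈ {i | T ≤ |y i|}, y i ^ 2 := card_nsmul_le_sum _ _ _ fun i hi => by
        rw [← sq_abs (y i)]; exact pow_le_pow_left₀ hT (mem_filter.1 hi).2 2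
    _ ≤ ∑ i, y i ^ 2 := sum_le_univ_sum_of_nonneg fun i => sq_nonneg _

lemma card_abs_mem_Ico_le (y : ι → ℝ) {a a' b : ℝ} (ha : a' < a) :
    #{i | a ≤ |y i| ∧ |y i| < b} ≤ #{i | a' < y i ∧ y i < b} + #{i | -b < y i ∧ y i < -a'} := by
  classical
  refine (card_le_card fun i hi => ?_).trans (card_union_le _ _)
  simp only [mem_filter, mem_univ, true_and, mem_union] at hi ⊢
  rcases le_or_gt 0 (y i) with hy | hy
  · rw [abs_of_nonneg hy] at hi
    exact Or.inl ⟨by linarith, hi.2⟩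
  · rw [abs_of_neg hy] at hi
    exact Or.inr ⟨by linarith, by linarith⟩

lemma card_Ioo_le_card_abs_sub_le (y : ι → ℝ) {a b c ρ : ℝ} (ha : c - ρ ≤ a) (hb : b ≤ c + ρ) :
    #{i | a < y i ∧ y i < b} ≤ #{i | |y i - c| ≤ ρ} :=
  card_le_card fun i hi => by
    simp only [mem_filter, mem_univ, true_and] at hi ⊢
    rw [abs_sub_le_iff]
    constructor <;> linarith

noncomputable def shell (y : ι → ℝ) (h : ℝ) (j : ℕ) : Finset ι := {i | ⌊|y i| / h⌋₊ = j}

variable {y : ι → ℝ} {h : ℝ}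

lemma card_tail_le {δ T : ℝ} (hδ : 0 < δ) (hT : 0 ≤ T) (hT2 : 2 / δ ≤ T ^ 2)
    (hsq : ∑ i, y i ^ 2 ≤ Fintype.card ι) :
    (#{i | T ≤ |y i|} : ℝ) ≤ δ / 2 * Fintype.card ι := by
  have := (mul_le_mul_of_nonneg_left hT2 (Nat.cast_nonneg _)).trans
    ((card_le_abs_mul_sq_le_sum_sq y hT).trans hsq)
  rw [mul_div_assoc', div_le_iff₀ hδ] at this
  linarith

lemma le_card_Ioo_and_le_card_neg_Ioo {a κ κ' ρ m B : ℝ} (hκ : κ < a) (hκκ' : κ' - κ ≤ 2 * ρ)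
    (hband : B ≤ #{i | a ≤ |y i| ∧ |y i| < κ'})
    (hwin : ∀ μ, (#{i | |y i - μ| ≤ ρ} : ℝ) < B - m) :
    m ≤ #{i | κ < y i ∧ y i < κ'} ∧ m ≤ #{i | -κ' < y i ∧ y i < -κ} := by
  have hsplit : (#{i | a ≤ |y i| ∧ |y i| < κ'} : ℝ) ≤
      #{i | κ < y i ∧ y i < κ'} + #{i | -κ' < y i ∧ y i < -κ} := by
    exact_mod_cast card_abs_mem_Ico_le y hκ
  have hpos : (#{i | κ < y i ∧ y i < κ'} : ℝ) ≤ #{i | |y i - (κ + κ') / 2| ≤ ρ} := by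
    exact_mod_cast card_Ioo_le_card_abs_sub_le y (by linarith) (by linarith)
  have hneg : (#{i | -κ' < y i ∧ y i < -κ} : ℝ) ≤ #{i | |y i - -((κ + κ') / 2)| ≤ ρ} := by
    exact_mod_cast card_Ioo_le_card_abs_sub_le y (by linarith) (by linarith)
  have := hwin ((κ + κ') / 2)
  have := hwin (-((κ + κ') / 2))
  constructor <;> linarith

lemma mem_shell (hh : 0 < h) {j : ℕ} {i : ι} :
    i ∈ shell y h j ↔ j * h ≤ |y i| ∧ |y i| < (j + 1) * h := by
  simp only [shell, mem_filter, mem_univ, true_and]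
  rw [Nat.floor_eq_iff (by positivity), le_div_iff₀ hh, div_lt_iff₀ hh]

lemma card_le_sum_card_shell_add (hh : 0 < h) (M : ℕ) :
    Fintype.card ι ≤ ∑ j ∈ range M, #(shell y h j) + #{i | M * h ≤ |y i|} := by
  unfold shell
  rw [sum_card_fiberwise_eq_card_filter, ← card_univ,
    ← card_filter_add_card_filter_not (s := univ) (fun i => ⌊|y i| / h⌋₊ ∈ range M)]
  gcongr with i
  rw [mem_range, not_lt, Nat.le_floor_iff (by positivity), le_div_iff₀ hh]
  exact id

lemma card_shell_add_card_shell_succ_le (hh : 0 < h) (j : ℕ) :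
    #(shell y h j) + #(shell y h (j + 1)) ≤ #{i | j * h ≤ |y i| ∧ |y i| < (j + 2) * h} := by
  rw [← sum_pair (f := fun j => #(shell y h j)) (by omega : j ≠ j + 1)]
  unfold shell
  rw [sum_card_fiberwise_eq_card_filter]
  gcongr with i
  rw [mem_insert, mem_singleton, Nat.floor_eq_iff (by positivity), Nat.floor_eq_iff (by positivity),
    le_div_iff₀ hh, div_lt_iff₀ hh, le_div_iff₀ hh, div_lt_iff₀ hh]
  push_cast
  rintro (⟨h1, h2⟩ | ⟨h1, h2⟩) <;> constructor <;> linarith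

lemma card_le_card_band_add (hh : 0 < h) {ε : ℝ} (hε : 0 ≤ ε) {M j₀ : ℕ}
    (hheavy : {j ∈ range M | ε * Fintype.card ι ≤ #(shell y h j)} ⊆ {j₀, j₀ + 1}) :
    (Fintype.card ι : ℝ) ≤ #{i | j₀ * h ≤ |y i| ∧ |y i| < (j₀ + 2) * h}
      + M * (ε * Fintype.card ι) + #{i | M * h ≤ |y i|} := by
  set n : ℝ := ↑(Fintype.card ι)
  set c : ℕ → ℝ := fun j => #(shell y h j)
  have hsplit := sum_filter_add_sum_filter_not (range M) (fun j => ε * n ≤ c j) c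
  have hheavy_le : ∑ j ∈ range M with ε * n ≤ c j, c j ≤ c j₀ + c (j₀ + 1) :=
    calc _ ≤ ∑ j ∈ {j₀, j₀ + 1}, c j :=
          sum_le_sum_of_subset_of_nonneg hheavy fun _ _ _ => Nat.cast_nonneg _
      _ = c j₀ + c (j₀ + 1) := sum_pair (by omega)
  have hlight_le : ∑ j ∈ range M with ¬ ε * n ≤ c j, c j ≤ M * (ε * n) :=
    calc _ ≤ #{j ∈ range M | ¬ ε * n ≤ c j} • (ε * n) :=
          sum_le_card_nsmul _ _ _ fun j hj => (not_le.1 (mem_filter.1 hj).2).le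
      _ ≤ M * (ε * n) := by
          rw [nsmul_eq_mul]
          gcongr
          exact_mod_cast (card_filter_le _ _).trans (card_range M).le
  have hdecomp : n ≤ ∑ j ∈ range M, c j + #{i | M * h ≤ |y i|} := by
    simp only [n, c]
    exact_mod_cast card_le_sum_card_shell_add (y := y) hh M
  have hpair : c j₀ + c (j₀ + 1) ≤ #{i | j₀ * h ≤ |y i| ∧ |y i| < (j₀ + 2) * h} := by
    simp only [c]
    exact_mod_cast card_shell_add_card_shell_succ_le (y := y) hh j₀
  linarith

lemma le_card_small_and_le_card_annulus (hh : 0 < h) {M j k : ℕ} {m : ℝ} (hjk : j + 2 ≤ k)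
    (hkM : k < M) (hj : m ≤ #(shell y h j)) (hk : m ≤ #(shell y h k)) :
    m ≤ #{i | |y i| ≤ (j + 1) * h} ∧ m ≤ #{i | (j + 1) * h + h / 2 < |y i| ∧ |y i| ≤ M * h} := by
  have hjk' : (j : ℝ) + 2 ≤ k := by exact_mod_cast hjk
  have hkM' : (k : ℝ) + 1 ≤ M := by exact_mod_cast hkM
  refine ⟨hj.trans (Nat.cast_le.2 (card_le_card fun i hi => ?_)),
    hk.trans (Nat.cast_le.2 (card_le_card fun i hi => ?_))⟩
  · exact mem_filter.2 ⟨mem_univ _, ((mem_shell hh).1 hi).2.le⟩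
  · obtain ⟨h1, h2⟩ := (mem_shell hh).1 hi
    exact mem_filter.2 ⟨mem_univ _, by nlinarith, by nlinarith⟩

theorem small_and_annulus_or_opposite_of_card_window_lt {δ ρ ε : ℝ} {M : ℕ} (hh : 0 < h)
    (hhρ : 2 * h ≤ ρ) (hε : 0 ≤ ε) (hεM : (M + 1) * ε ≤ δ / 2)
    (htail : (#{i | M * h ≤ |y i|} : ℝ) ≤ δ / 2 * Fintype.card ι)
    (hwin : ∀ μ, (#{i | |y i - μ| ≤ ρ} : ℝ) < (1 - δ) * Fintype.card ι) :
    (∃ κ ∈ levels (h / 2) (2 * M + 4), ∃ κ' ∈ levels (h / 2) (2 * M + 4),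
      ε * Fintype.card ι ≤ #{i | |y i| ≤ κ} ∧
      ε * Fintype.card ι ≤ #{i | κ + h / 2 < |y i| ∧ |y i| ≤ κ'}) ∨
    (∃ κ ∈ levels (h / 2) (2 * M + 4), ∃ κ' ∈ levels (h / 2) (2 * M + 4),
      ε * Fintype.card ι ≤ #{i | κ < y i ∧ y i < κ'} ∧
      ε * Fintype.card ι ≤ #{i | -κ' < y i ∧ y i < -κ}) := by
  set n : ℝ := ↑(Fintype.card ι)
  set heavy := {j ∈ range M | ε * n ≤ #(shell y h j)}
  by_cases hsep : ∃ j ∈ heavy, ∃ k ∈ heavy, j + 2 ≤ k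
  · obtain ⟨j, hj, k, hk, hjk⟩ := hsep
    simp only [heavy, mem_filter, mem_range] at hj hk
    left
    refine ⟨(j + 1) * h, mem_image.2 ⟨2 * j + 2, mem_Icc.2 ⟨by omega, by omega⟩, ?_⟩,
      M * h, mem_image.2 ⟨2 * M, mem_Icc.2 ⟨by omega, by omega⟩, ?_⟩,
      le_card_small_and_le_card_annulus hh hjk hk.1 hj.2 hk.2⟩ <;> push_cast <;> ring
  push Not at hsep
  obtain ⟨j₀, hj₀M, hsub⟩ := exists_subset_pair_of_forall_lt_add_two (filter_subset _ _) hsep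
  have hband := card_le_card_band_add hh hε hsub
  have hεn : M * (ε * n) + ε * n ≤ δ / 2 * n := by
    linarith [mul_le_mul_of_nonneg_right hεM (Nat.cast_nonneg (Fintype.card ι))]
  rcases Nat.eq_zero_or_pos j₀ with rfl | hj₀
  · exfalso
    simp only [Nat.cast_zero, zero_mul, zero_add] at hband
    have hzero : (#{i | 0 ≤ |y i| ∧ |y i| < 2 * h} : ℝ) ≤ #{i | |y i - 0| ≤ ρ} :=
      Nat.cast_le.2 <| card_le_card fun i hi => by
        simp only [mem_filter, mem_univ, true_and, sub_zero] at hi ⊢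
        linarith
    have := hwin 0
    linarith [mul_nonneg hε (Nat.cast_nonneg (α := ℝ) (Fintype.card ι))]
  · right
    refine ⟨(j₀ - 1 / 2) * h, mem_image.2 ⟨2 * j₀ - 1, mem_Icc.2 ⟨by omega, by omega⟩, ?_⟩,
      (j₀ + 2) * h, mem_image.2 ⟨2 * j₀ + 4, mem_Icc.2 ⟨by omega, by omega⟩, ?_⟩,
      le_card_Ioo_and_le_card_neg_Ioo (a := j₀ * h) (ρ := ρ) (by linarith) (by linarith)
        (le_refl _) fun μ => ?_⟩
    · rw [Nat.cast_sub (by omega)]; push_cast; ring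
    · push_cast; ring
    · have := hwin μ
      linarith

end Counting

/-- For `δ, ρ ∈ (0,1/4)` there exist `ν, ν' > 0` and a finite set
`K` of positive reals, depending only on `δ, ρ`, such that every unit vector
which is not `(δ,ρ)`-almost-constant satisfies one of the two listed
level-set conditions. -/
theorem nonconstant_vectors_admissible
    (δ ρ : ℝ) (hδ : δ ∈ Set.Ioo (0 : ℝ) (1/4)) (hρ : ρ ∈ Set.Ioo (0 : ℝ) (1/4)) :
    ∃ ν ν' : ℝ, 0 < ν ∧ 0 < ν' ∧ ∃ K : Finset ℝ, (∀ κ ∈ K, 0 < κ) ∧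
    ∀ (n : ℕ) (x : Fin n → ℝ), (∑ i, x i ^ 2 = 1) →
      (¬ ∃ lam : ℝ,
        (1 - δ) * n ≤ ((univ.filter fun i => |x i - lam| ≤ ρ / Real.sqrt n).card : ℝ)) →
      ((∃ κ ∈ K, ∃ κ' ∈ K,
          ν * n ≤ ((univ.filter fun i => |x i| ≤ κ / Real.sqrt n).card : ℝ) ∧
          ν * n ≤ ((univ.filter fun i =>
            (κ + ν') / Real.sqrt n < |x i| ∧ |x i| ≤ κ' / Real.sqrt n).card : ℝ)) ∨
       (∃ κ ∈ K, ∃ κ' ∈ K,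
          ν * n ≤ ((univ.filter fun i =>
            κ / Real.sqrt n < x i ∧ x i < κ' / Real.sqrt n).card : ℝ) ∧
          ν * n ≤ ((univ.filter fun i =>
            -(κ' / Real.sqrt n) < x i ∧ x i < -(κ / Real.sqrt n)).card : ℝ))) := by
  obtain ⟨hδ, -⟩ := hδ
  obtain ⟨hρ, -⟩ := hρ
  obtain ⟨M, hM⟩ := exists_nat_le_mul_sq (2 / δ) (half_pos hρ)
  refine ⟨δ / (2 * (M + 1)), ρ / 2 / 2, by positivity, by positivity,
    levels (ρ / 2 / 2) (2 * M + 4), fun κ hκ => pos_of_mem_levels (by positivity) hκ,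
    fun n x hx hnc => ?_⟩
  have hn : 0 < n := Nat.pos_of_ne_zero (by rintro rfl; simp at hx)
  have hs : 0 < √(n : ℝ) := by positivity
  have hsq : ∑ i, (x i * √n) ^ 2 ≤ Fintype.card (Fin n) := by
    simp [mul_pow, ← sum_mul, hx]
  have hwin : ∀ μ, (#{i | |x i * √n - μ| ≤ ρ} : ℝ) < (1 - δ) * Fintype.card (Fin n) := fun μ => by
    simp only [abs_mul_sub_le_iff hs, Fintype.card_fin]
    exact not_le.1 fun h => hnc ⟨μ / √n, h⟩
  have key := small_and_annulus_or_opposite_of_card_window_lt (y := fun i => x i * √n)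
    (ε := δ / (2 * (M + 1)))
    (by positivity) (by linarith) (by positivity) (le_of_eq (by field_simp))
    (card_tail_le hδ (by positivity) hM hsq) hwin
  simpa only [abs_mul, abs_of_pos hs, Fintype.card_fin, le_div_iff₀ hs, div_lt_iff₀ hs,
    lt_div_iff₀ hs, ← neg_div] using key
end

section
/- Let n be even, let q be uniform on {0,1}^n_{n/2}, and fix ε ∈ (0,1/8). Let G be the event that (n − ε²n − 1)^{-1} Σ_{i=2}^{n−ε²n} q_i ∈ [1/2 − ε⁴/2, 1/2 + ε⁴/2]. Then conditioned on any realization q' = (q_2,…,q_{n−ε²n}) in G, the conditional probability that q_1 = 0 lies in [1/2 − 2ε², 1/2 + 2ε²] for all sufficiently large n. -/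
set_option maxHeartbeats 1000000
open Finset
open scoped Classical

theorem card_slice_filter {α : Type*} [Fintype α] [DecidableEq α] (c : ℕ)
    (M T : Finset α) (hT : T ⊆ M) (htc : T.card ≤ c) :
    ((Finset.powersetCard c (univ : Finset α)).filter fun s => s ∩ M = T).card
      = (Fintype.card α - M.card).choose (c - T.card) := by
  have : ((Finset.powersetCard c (univ : Finset α)).filter fun s => s ∩ M = T).card
      = (Finset.powersetCard (c - T.card) Mᶜ).card := by
    apply Finset.card_bij' (fun s _ => s \ M) (fun u _ => u ∪ T)
    · intro s hs
      simp only [mem_filter, Finset.mem_powersetCard] at hs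
      obtain ⟨⟨-, hcard⟩, hint⟩ := hs
      rw [Finset.mem_powersetCard]
      refine ⟨fun x hx => ?_, ?_⟩
      · simp only [mem_sdiff] at hx; simp [hx.2]
      · have := Finset.card_sdiff_add_card_inter s M
        rw [hint] at this; omega
    · intro u hu
      rw [Finset.mem_powersetCard] at hu
      obtain ⟨hsub, hcard⟩ := hu
      have hdisj : Disjoint u T := by
        refine Finset.disjoint_left.mpr fun x hx hxT => ?_
        have := hsub hx; simp only [Finset.mem_compl] at this
        exact this (hT hxT)
      have huM : u ∩ M = ∅ := by
        refine Finset.eq_empty_of_forall_notMem fun x hx => ?_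
        simp only [mem_inter] at hx
        have := hsub hx.1; simp only [Finset.mem_compl] at this; exact this hx.2
      simp only [mem_filter, Finset.mem_powersetCard]
      refine ⟨⟨Finset.subset_univ _, ?_⟩, ?_⟩
      · rw [Finset.card_union_of_disjoint hdisj, hcard]
        omega
      · rw [Finset.union_inter_distrib_right, huM, Finset.empty_union,
          Finset.inter_eq_left.mpr hT]
    · intro s hs
      simp only [mem_filter, Finset.mem_powersetCard] at hs
      rw [← hs.2, Finset.sdiff_union_inter]
    · intro u hu
      rw [Finset.mem_powersetCard] at hu
      rw [Finset.union_sdiff_distrib, Finset.sdiff_eq_self_of_disjoint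
        (Finset.disjoint_left.mpr fun x hx hxM => by
          have := hu.1 hx; simp only [Finset.mem_compl] at this; exact this hxM),
        Finset.sdiff_eq_empty_iff_subset.mpr hT, Finset.union_empty]
  rw [this, Finset.card_powersetCard, Finset.card_compl]

/-- For `q` uniform on the central slice of `{0,1}^n` (`n` even)
and `ε ∈ (0,1/8)`: conditioned on any realization of the middle coordinates
`q_2,…,q_{n−ε²n}` whose average is within `ε⁴/2` of `1/2`, the conditional
probability that `q_1 = 0` lies in `[1/2 − 2ε², 1/2 + 2ε²]` for large `n`. -/
theorem slice_conditional_first_coordinate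
    (ε : ℝ) (hε : ε ∈ Set.Ioo (0 : ℝ) (1/8)) :
    ∃ n₀ : ℕ, ∀ n, n₀ ≤ n → ∀ hpos : 0 < n, 2 ∣ n →
    ∀ T : Finset (Fin n),
      T ⊆ (univ.filter fun i : Fin n =>
            1 ≤ (i : ℕ) ∧ ((i : ℕ) : ℝ) + 1 ≤ (n : ℝ) - ε^2 * n) →
      ((T.card : ℝ) / ((n : ℝ) - ε^2 * n - 1)
          ∈ Set.Icc (1/2 - ε^4/2) (1/2 + ε^4/2)) →
      ((((Finset.powersetCard (n/2) (univ : Finset (Fin n))).filter fun s =>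
            s ∩ (univ.filter fun i : Fin n =>
              1 ≤ (i : ℕ) ∧ ((i : ℕ) : ℝ) + 1 ≤ (n : ℝ) - ε^2 * n) = T
            ∧ (⟨0, hpos⟩ : Fin n) ∉ s).card : ℝ)
          / (((Finset.powersetCard (n/2) (univ : Finset (Fin n))).filter fun s =>
            s ∩ (univ.filter fun i : Fin n =>
              1 ≤ (i : ℕ) ∧ ((i : ℕ) : ℝ) + 1 ≤ (n : ℝ) - ε^2 * n) = T).card : ℝ))
        ∈ Set.Icc (1/2 - 2*ε^2) (1/2 + 2*ε^2) := by
  obtain ⟨hε0, hε8⟩ := hε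
  refine ⟨⌈(8:ℝ)/ε^4⌉₊ + 2, fun n hn hpos hn2 T hTsub hTavg => ?_⟩
  set M : Finset (Fin n) := univ.filter fun i : Fin n =>
      1 ≤ (i : ℕ) ∧ ((i : ℕ) : ℝ) + 1 ≤ (n : ℝ) - ε^2 * n with hMdef
  -- basic numeric facts
  have hε4 : 0 < ε^4 := by positivity
  have hε2 : 0 < ε^2 := by positivity
  have hε2small : ε^2 < 1/64 := by nlinarith
  have hε42 : ε^4 ≤ ε^2 := by nlinarith
  have hNge : (8:ℝ)/ε^4 ≤ n := by
    calc (8:ℝ)/ε^4 ≤ ⌈(8:ℝ)/ε^4⌉₊ := Nat.le_ceil _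
    _ ≤ n := by exact_mod_cast le_trans (by omega) hn
  have hN8 : (8:ℝ) ≤ ε^4 * n := by
    rw [div_le_iff₀ hε4] at hNge; linarith [hNge]
  have hN8' : (8:ℝ) ≤ ε^2 * n := le_trans hN8 (by nlinarith [Nat.cast_nonneg (α := ℝ) n])
  have hn0 : (0:ℝ) < n := by positivity
  set b : ℕ := ⌊(n:ℝ) - ε^2 * n⌋₊ with hbdef
  have hxpos : (0:ℝ) ≤ (n:ℝ) - ε^2*n := by nlinarith
  have hbu : (b:ℝ) ≤ (n:ℝ) - ε^2*n := Nat.floor_le hxpos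
  have hbl : (n:ℝ) - ε^2*n - 1 < b := by
    have := Nat.lt_floor_add_one ((n:ℝ) - ε^2*n); linarith
  have hb1 : 1 ≤ b := by
    rw [hbdef]; apply Nat.le_floor; push_cast; nlinarith
  have hbn : b ≤ n := by
    have : (b:ℝ) ≤ n := by linarith
    exact_mod_cast this
  -- card of M
  have hMcard : M.card = b - 1 := by
    have h1 : M.card = (Finset.Ico 1 b).card := by
      refine Finset.card_bij' (s := M) (t := Finset.Ico 1 b) (fun i _ => (i:ℕ))
        (fun j _ => (⟨j % n, Nat.mod_lt j hpos⟩ : Fin n)) ?_ ?_ ?_ ?_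
      · intro i hi
        show (i:ℕ) ∈ Finset.Ico 1 b
        simp only [hMdef, mem_filter] at hi
        obtain ⟨-, h1i, h2i⟩ := hi
        rw [Finset.mem_Ico]
        refine ⟨h1i, ?_⟩
        have : (i:ℕ) + 1 ≤ b := Nat.le_floor (by push_cast; linarith)
        omega
      · intro j hj
        show (⟨j % n, Nat.mod_lt j hpos⟩ : Fin n) ∈ M
        rw [Finset.mem_Ico] at hj
        have hjn : j % n = j := Nat.mod_eq_of_lt (lt_of_lt_of_le hj.2 hbn)
        simp only [hMdef, mem_filter, mem_univ, true_and]
        rw [hjn]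
        refine ⟨hj.1, ?_⟩
        have : ((j:ℕ) + 1 : ℝ) ≤ b := by exact_mod_cast Nat.succ_le_of_lt hj.2
        push_cast at this ⊢; linarith
      · intro i hi
        show (⟨(i:ℕ) % n, Nat.mod_lt _ hpos⟩ : Fin n) = i
        apply Fin.ext
        exact Nat.mod_eq_of_lt i.isLt
      · intro j hj
        show ((⟨j % n, Nat.mod_lt j hpos⟩ : Fin n) : ℕ) = j
        rw [Finset.mem_Ico] at hj
        exact Nat.mod_eq_of_lt (lt_of_lt_of_le hj.2 hbn)
    rw [h1, Nat.card_Ico]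
  set t : ℕ := T.card with htdef
  set m : ℕ := M.card with hmdef
  have htm : t ≤ m := Finset.card_le_card hTsub
  have hmn : m ≤ n := by omega
  have hmR : (m:ℝ) = (b:ℝ) - 1 := by
    rw [hMcard, Nat.cast_sub hb1, Nat.cast_one]
  -- bounds on t
  have hD0 : (0:ℝ) < (n:ℝ) - ε^2*n - 1 := by nlinarith
  have htl : (1/2 - ε^4/2) * ((n:ℝ) - ε^2*n - 1) ≤ t := by
    have := hTavg.1
    rw [le_div_iff₀ hD0] at this; linarith
  have htu : (t:ℝ) ≤ (1/2 + ε^4/2) * ((n:ℝ) - ε^2*n - 1) := by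
    have := hTavg.2
    rw [div_le_iff₀ hD0] at this; linarith
  -- half of n
  obtain ⟨c, hc⟩ := hn2
  have hhalf : ((n/2 : ℕ) : ℝ) = (n:ℝ)/2 := by
    subst hc; rw [Nat.mul_div_cancel_left _ (by norm_num)]; push_cast; ring
  have hthalf : t ≤ n/2 := by
    have h1 : (t:ℝ) ≤ ((n/2:ℕ):ℝ) := by rw [hhalf]; nlinarith
    exact_mod_cast h1
  set k : ℕ := n/2 - t with hkdef
  have hkR : (k:ℝ) = (n:ℝ)/2 - t := by
    rw [hkdef]; push_cast [hthalf]; rw [hhalf]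
  set r : ℕ := n - m with hrdef
  have hrR : (r:ℝ) = (n:ℝ) - m := by rw [hrdef]; push_cast [hmn]; ring
  have hrx : ε^2*n ≤ (r:ℝ) := by rw [hrR, hmR]; linarith
  have hr0 : (0:ℝ) < r := by nlinarith
  have hkr : k < r := by
    have h1 : (k:ℝ) < (r:ℝ) := by
      rw [hkR]; nlinarith
    exact_mod_cast h1
  -- rewrite the numerator predicate
  have h0M : (⟨0, hpos⟩ : Fin n) ∉ M := by
    simp [hMdef]
  have h0T : (⟨0, hpos⟩ : Fin n) ∉ T := fun h => h0M (hTsub h)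
  have hpred : ((Finset.powersetCard (n/2) (univ : Finset (Fin n))).filter fun s =>
      s ∩ M = T ∧ (⟨0, hpos⟩ : Fin n) ∉ s)
      = ((Finset.powersetCard (n/2) (univ : Finset (Fin n))).filter fun s =>
      s ∩ insert (⟨0, hpos⟩ : Fin n) M = T) := by
    apply Finset.filter_congr
    intro s _
    constructor
    · rintro ⟨h1, h2⟩
      rw [Finset.inter_insert_of_notMem h2, h1]
    · intro h
      have h2 : (⟨0, hpos⟩ : Fin n) ∉ s := by
        intro hz
        apply h0T
        rw [← h]
        exact Finset.mem_inter.mpr ⟨hz, Finset.mem_insert_self _ _⟩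
      rw [Finset.inter_insert_of_notMem h2] at h
      exact ⟨h, h2⟩
  have hT' : T ⊆ insert (⟨0, hpos⟩ : Fin n) M := hTsub.trans (Finset.subset_insert _ _)
  have hnum := card_slice_filter (n/2) (insert (⟨0, hpos⟩ : Fin n) M) T hT' hthalf
  have hden := card_slice_filter (n/2) M T hTsub hthalf
  rw [Fintype.card_fin, Finset.card_insert_of_notMem h0M] at hnum
  rw [Fintype.card_fin] at hden
  have hnm1 : n - (M.card + 1) = r - 1 := by omega
  rw [hnm1] at hnum
  rw [hpred, hnum, hden]
  -- the choose identity
  have hrpos : 1 ≤ r := by omega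
  have hid : r * (r-1).choose k = r.choose k * (r - k) := by
    have hr1 : r - 1 + 1 = r := by omega
    have h := Nat.add_one_mul_choose_eq (r-1) k
    simp only [Nat.succ_eq_add_one, hr1] at h
    rw [h, Nat.choose_succ_right_eq]
  have hC0 : 0 < r.choose k := Nat.choose_pos (le_of_lt hkr)
  have hrkR : ((r - k : ℕ):ℝ) = (r:ℝ) - k := by push_cast [le_of_lt hkr]; ring
  have hratio : (((r-1).choose k : ℝ)) / (r.choose k : ℝ) = ((r:ℝ) - k) / r := by
    rw [div_eq_div_iff (by exact_mod_cast hC0.ne' : (r.choose k : ℝ) ≠ 0) hr0.ne']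
    have := congrArg (fun x : ℕ => (x:ℝ)) hid
    push_cast at this
    rw [hrkR] at this
    linarith [this]
  rw [hratio]
  -- final arithmetic
  have hbR : (r:ℝ) = (n:ℝ) - b + 1 := by rw [hrR, hmR]; ring
  have hrub : (r:ℝ) ≤ ε^2*n + 2 := by rw [hbR]; linarith
  constructor
  · rw [le_div_iff₀ hr0]
    nlinarith [mul_le_mul_of_nonneg_left hrx (le_of_lt hε2)]
  · rw [div_le_iff₀ hr0]
    nlinarith [mul_le_mul_of_nonneg_left hrx (le_of_lt hε2)]
end

section
/- Fix ε > 0 and c ∈ (0, 1/√2). Let v ∈ ℝ^n be a fixed vector and R ∈ {0,1}^n be uniform on the slice {0,1}^n_{⌊n/2⌋}. Then for all sufficiently small c > 0 and sufficiently large n, sup_{v ∈ ℝ^n} P[ ‖R − v‖_2 ≤ c√n ] ≤ binom(n, ⌊n/2⌋)^{-1} · binom(n, ⌊2c²n⌋) ≤ (1/2 + ε)^n. -/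
/-!
Round `v` to the set `U = {i | 1/2 ≤ v i}` and let `H` be the coordinates where `v i` lies in
`(1/4, 3/4)`. Every `s` in the ball pays at least `1/16` on each coordinate of `H`, so
`#H ≤ 16c²n`; off `H`, every coordinate where `s` disagrees with `U` costs at least `9/16`, so
`#((s ∆ U) \ H) ≤ (16/9)c²n`. Hence the ball has at most `2^(16c²n) · (J + 1) · C(n, J)` points,
`J = ⌊(16/9)c²n⌋`, and since `C(n, k + 1) / C(n, k)` is huge for `k ≤ 2c²n` with `c` small, this is
at most `C(n, ⌊2c²n⌋)`, whose ratio to the central binomial coefficient is at most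
`(n + 1)(1 + t)ⁿ t^(-2c²n) / 2ⁿ ≤ (1/2 + ε)ⁿ` for `t = min ε 1` and `c` small.
-/

open Finset Filter
open scoped Classical symmDiff

lemma mul_choose_le_choose_succ {K n k : ℕ} (h : K * (k + 1) + k ≤ n) :
    K * n.choose k ≤ n.choose (k + 1) := by
  refine Nat.le_of_mul_le_mul_right ?_ k.succ_pos
  calc K * n.choose k * (k + 1) = n.choose k * (K * (k + 1)) := by ring
    _ ≤ n.choose k * (n - k) := Nat.mul_le_mul_left _ (by omega)
    _ = n.choose (k + 1) * (k + 1) := (Nat.choose_succ_right_eq n k).symm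

lemma pow_mul_choose_le_choose {K n j k : ℕ} (hjk : j ≤ k) (hk : (K + 1) * k ≤ n) :
    K ^ (k - j) * n.choose j ≤ n.choose k := by
  induction k, hjk using Nat.le_induction with
  | base => simp
  | succ k hjk ih =>
    rw [Nat.sub_add_comm hjk, pow_succ', mul_assoc]
    exact (Nat.mul_le_mul_left K (ih (by nlinarith))).trans
      (mul_choose_le_choose_succ (by nlinarith))

lemma two_pow_le_succ_mul_choose_half (n : ℕ) : 2 ^ n ≤ (n + 1) * n.choose (n / 2) := by
  rw [← Nat.sum_range_choose n]
  calc ∑ i ∈ range (n + 1), n.choose i ≤ ∑ _i ∈ range (n + 1), n.choose (n / 2) :=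
        sum_le_sum fun i _ => Nat.choose_le_middle i n
    _ = (n + 1) * n.choose (n / 2) := by simp

lemma choose_le_one_add_pow_div_pow (n k : ℕ) {t : ℝ} (ht : 0 < t) :
    (n.choose k : ℝ) ≤ (1 + t) ^ n / t ^ k := by
  rw [le_div_iff₀ (by positivity), add_comm, add_pow]
  rcases le_or_gt k n with hkn | hnk
  · calc (n.choose k : ℝ) * t ^ k = t ^ k * 1 ^ (n - k) * n.choose k := by ring
      _ ≤ ∑ m ∈ range (n + 1), t ^ m * 1 ^ (n - m) * n.choose m :=
        single_le_sum (f := fun m => t ^ m * 1 ^ (n - m) * (n.choose m : ℝ))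
          (fun m _ => by positivity) (mem_range.2 (by omega))
  · rw [Nat.choose_eq_zero_of_lt hnk, Nat.cast_zero, zero_mul]
    positivity

section SetFamily

variable {α : Type*} [Fintype α]

lemma card_mul_le_of_le_of_sum_le {f : α → ℝ} (hf : ∀ i, 0 ≤ f i) {r : ℝ}
    (hsum : ∑ i, f i ≤ r) {S : Finset α} {a : ℝ} (hS : ∀ i ∈ S, a ≤ f i) : #S * a ≤ r :=
  calc #S * a = #S • a := (nsmul_eq_mul _ _).symm
    _ ≤ ∑ i ∈ S, f i := card_nsmul_le_sum S f a hS
    _ ≤ ∑ i, f i := sum_le_univ_sum_of_nonneg hf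
    _ ≤ r := hsum

variable [DecidableEq α]

lemma card_filter_card_le_le_mul_choose {J : ℕ} (hJ : 2 * J ≤ Fintype.card α) :
    #{T : Finset α | #T ≤ J} ≤ (J + 1) * (Fintype.card α).choose J := by
  calc #{T : Finset α | #T ≤ J}
      ≤ #((range (J + 1)).biUnion fun j => powersetCard j (univ : Finset α)) :=
        card_le_card fun T hT => by
          simpa [mem_biUnion, Nat.lt_succ_iff] using hT
    _ ≤ ∑ j ∈ range (J + 1), #(powersetCard j (univ : Finset α)) := card_biUnion_le
    _ ≤ ∑ _j ∈ range (J + 1), (Fintype.card α).choose J := by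
        gcongr with j hj
        rw [card_powersetCard, card_univ]
        simpa using pow_mul_choose_le_choose (K := 1) (mem_range_succ_iff.1 hj) (by omega)
    _ = (J + 1) * (Fintype.card α).choose J := by simp

lemma card_le_two_pow_mul_card_of_card_symmDiff_sdiff_le {𝒜 : Finset (Finset α)}
    {U H : Finset α} {J : ℕ} (h : ∀ s ∈ 𝒜, #((s ∆ U) \ H) ≤ J) :
    #𝒜 ≤ 2 ^ #H * #{T : Finset α | #T ≤ J} := by
  rw [← card_powerset, ← card_product]
  refine card_le_card_of_injOn (fun s => ((s ∆ U) ∩ H, (s ∆ U) \ H)) (fun s hs => ?_) ?_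
  · simp [h s hs]
  · intro s _ s' _ hss'
    simp only [Prod.mk.injEq] at hss'
    refine symmDiff_left_injective U (show s ∆ U = s' ∆ U from ?_)
    rw [← sdiff_union_inter (s ∆ U) H, ← sdiff_union_inter (s' ∆ U) H, hss'.1, hss'.2]

lemma one_div_sixteen_le_sq_ite_sub {p : Prop} [Decidable p] {y : ℝ}
    (hy : 1 / 4 < y ∧ y < 3 / 4) : 1 / 16 ≤ ((if p then 1 else 0) - y) ^ 2 := by
  split_ifs <;> nlinarith [hy.1, hy.2]

lemma nine_div_sixteen_le_sq_ite_sub {p : Prop} [Decidable p] {y : ℝ}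
    (hy : ¬(1 / 4 < y ∧ y < 3 / 4)) (hp : p ↔ y < 1 / 2) :
    9 / 16 ≤ ((if p then 1 else 0) - y) ^ 2 := by
  rw [not_and_or, not_lt, not_lt] at hy
  split_ifs with h
  · have := hp.1 h
    rcases hy with hy | hy <;> nlinarith
  · have := not_lt.1 (mt hp.2 h)
    rcases hy with hy | hy <;> nlinarith

theorem card_filter_sum_sq_le_le (v : α → ℝ) (r : ℝ) :
    #{s : Finset α | ∑ i, ((if i ∈ s then 1 else 0) - v i) ^ 2 ≤ r}
      ≤ 2 ^ ⌊16 * r⌋₊ * #{T : Finset α | #T ≤ ⌊16 / 9 * r⌋₊} := by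
  set 𝒜 : Finset (Finset α) := {s : Finset α | ∑ i, ((if i ∈ s then 1 else 0) - v i) ^ 2 ≤ r}
  have hsum : ∀ s ∈ 𝒜, ∑ i, ((if i ∈ s then 1 else 0) - v i) ^ 2 ≤ r :=
    fun s hs => by simpa [𝒜] using hs
  rcases 𝒜.eq_empty_or_nonempty with h𝒜 | ⟨s₀, hs₀⟩
  · simp [h𝒜]
  set H : Finset α := {i | 1 / 4 < v i ∧ v i < 3 / 4}
  have hH : #H ≤ ⌊16 * r⌋₊ := by
    refine Nat.le_floor ?_
    have := card_mul_le_of_le_of_sum_le (fun _ => sq_nonneg _) (hsum s₀ hs₀) (S := H)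
      fun i hi => one_div_sixteen_le_sq_ite_sub (mem_filter.1 hi).2
    linarith
  set U : Finset α := {i | 1 / 2 ≤ v i}
  calc #𝒜 ≤ 2 ^ #H * #{T : Finset α | #T ≤ ⌊16 / 9 * r⌋₊} := by
        refine card_le_two_pow_mul_card_of_card_symmDiff_sdiff_le (U := U)
          fun s hs => Nat.le_floor ?_
        have := card_mul_le_of_le_of_sum_le (fun _ => sq_nonneg _) (hsum s hs)
          (S := (s ∆ U) \ H) fun i hi => by
            simp only [Finset.mem_sdiff, mem_symmDiff, mem_filter, mem_univ, true_and, H, U] at hi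
            exact nine_div_sixteen_le_sq_ite_sub hi.2 (by rw [← not_le]; tauto)
        linarith
    _ ≤ 2 ^ ⌊16 * r⌋₊ * #{T : Finset α | #T ≤ ⌊16 / 9 * r⌋₊} := by
        gcongr
        exact one_le_two

end SetFamily

theorem eventually_card_filter_sum_sq_le_le_choose {γ : ℝ} (hγ : 0 < γ)
    (hγ' : γ ≤ 1 / 2 ^ 102) :
    ∀ᶠ n : ℕ in atTop, ∀ v : Fin n → ℝ,
      #{s : Finset (Fin n) | ∑ i, ((if i ∈ s then 1 else 0) - v i) ^ 2 ≤ γ * n}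
        ≤ n.choose ⌊2 * γ * n⌋₊ := by
  -- `R - J ≈ (2/9) γ n`, so `M + J ≤ 100 (R - J)` once `γ n ≥ 23`; and `γ ≤ 2⁻¹⁰²` makes
  -- `C(n, k + 1) ≥ 2 ^ 100 * C(n, k)` for all `k < R`.
  filter_upwards [(tendsto_natCast_atTop_atTop.const_mul_atTop hγ).eventually_ge_atTop 23]
    with n hn v
  set M := ⌊16 * (γ * n)⌋₊
  set J := ⌊16 / 9 * (γ * n)⌋₊
  set R := ⌊2 * γ * n⌋₊
  have hM : (M : ℝ) ≤ 16 * (γ * n) := Nat.floor_le (by positivity)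
  have hJ : (J : ℝ) ≤ 16 / 9 * (γ * n) := Nat.floor_le (by positivity)
  have hR : (R : ℝ) ≤ 2 * γ * n := Nat.floor_le (by positivity)
  have hR' : 2 * γ * n < R + 1 := Nat.lt_floor_add_one _
  have hJR : J ≤ R := by exact_mod_cast (show (J : ℝ) ≤ R by linarith)
  have h2J : 2 * J ≤ Fintype.card (Fin n) := by
    rw [Fintype.card_fin]
    exact_mod_cast (show (2 * J : ℝ) ≤ n by nlinarith)
  have hMJ : M + J ≤ 100 * (R - J) := by
    have : (M + J : ℝ) + 100 * J ≤ 100 * R := by linarith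
    have : M + J + 100 * J ≤ 100 * R := by exact_mod_cast this
    omega
  have hRn : (2 ^ 100 + 1) * R ≤ n := by
    exact_mod_cast (show ((2 ^ 100 + 1) * R : ℝ) ≤ n by nlinarith)
  calc _ ≤ 2 ^ M * #{T : Finset (Fin n) | #T ≤ J} := card_filter_sum_sq_le_le v (γ * n)
    _ ≤ 2 ^ M * ((J + 1) * n.choose J) := by
        gcongr
        simpa using card_filter_card_le_le_mul_choose h2J
    _ ≤ 2 ^ M * (2 ^ J * n.choose J) := by gcongr; exact Nat.lt_two_pow_self
    _ = 2 ^ (M + J) * n.choose J := by ring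
    _ ≤ (2 ^ 100) ^ (R - J) * n.choose J := by
        rw [← pow_mul]; gcongr; exact one_le_two
    _ ≤ n.choose R := pow_mul_choose_le_choose hJR hRn

lemma eventually_add_one_le_pow {s : ℝ} (hs : 1 < s) :
    ∀ᶠ n : ℕ in atTop, (n : ℝ) + 1 ≤ s ^ n := by
  filter_upwards [(isLittleO_coe_const_pow_of_one_lt (R := ℝ) hs).bound one_half_pos,
    (tendsto_pow_atTop_atTop_of_one_lt hs).eventually_ge_atTop 2] with n hn h2
  rw [Real.norm_natCast, Real.norm_of_nonneg (by positivity)] at hn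
  linarith

theorem exists_eventually_choose_le_choose_half_mul_pow {ε : ℝ} (hε : 0 < ε) :
    ∃ κ > 0, ∀ᶠ n : ℕ in atTop, ∀ k : ℕ, (k : ℝ) ≤ κ * n →
      (n.choose k : ℝ) ≤ n.choose (n / 2) * (1 / 2 + ε) ^ n := by
  set t := min ε 1
  have ht : 0 < t := lt_min hε one_pos
  set L := Real.log (1 / t)
  have hL : 0 ≤ L := Real.log_nonneg (one_le_one_div ht (min_le_right _ _))
  set s := √((1 + 2 * ε) / (1 + ε))
  have hs : 1 < s := by
    rw [Real.lt_sqrt zero_le_one, one_pow, one_lt_div (by positivity)]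
    linarith
  have hs2 : s ^ 2 * (1 + ε) = 1 + 2 * ε := by
    rw [Real.sq_sqrt (by positivity), div_mul_cancel₀ _ (by positivity)]
  have hlogs : 0 < Real.log s := Real.log_pos hs
  refine ⟨Real.log s / (L + 1), by positivity, ?_⟩
  filter_upwards [eventually_add_one_le_pow hs] with n hn k hk
  have htk : (1 / t) ^ k ≤ s ^ n := by
    rw [← Real.exp_log (show 0 < 1 / t by positivity), ← Real.exp_log (by positivity : 0 < s),
      ← Real.exp_nat_mul, ← Real.exp_nat_mul, Real.exp_le_exp]
    calc k * L ≤ Real.log s / (L + 1) * n * (L + 1) := by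
          have := mul_le_mul_of_nonneg_right hk hL
          nlinarith
      _ = n * Real.log s := by field_simp
  have hcentral : (2 : ℝ) ^ n ≤ (n + 1) * n.choose (n / 2) := by
    exact_mod_cast two_pow_le_succ_mul_choose_half n
  refine le_of_mul_le_mul_left ?_ (by positivity : (0 : ℝ) < n + 1)
  calc ((n : ℝ) + 1) * n.choose k ≤ s ^ n * ((1 + t) ^ n * (1 / t) ^ k) := by
        rw [one_div, inv_pow, ← div_eq_mul_inv]
        gcongr
        exact choose_le_one_add_pow_div_pow n k ht
    _ ≤ s ^ n * ((1 + ε) ^ n * s ^ n) := by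
        gcongr
        exact min_le_left _ _
    _ = 2 ^ n * (1 / 2 + ε) ^ n := by
        rw [← mul_pow, ← mul_pow, ← mul_pow]
        congr 1
        linear_combination hs2
    _ ≤ (n + 1) * n.choose (n / 2) * (1 / 2 + ε) ^ n := by gcongr
    _ = (n + 1) * (n.choose (n / 2) * (1 / 2 + ε) ^ n) := by ring

/-- For `R` uniform on the central slice `{0,1}^n_{⌊n/2⌋}`, for
all sufficiently small `c > 0` and large `n`, uniformly in `v ∈ ℝⁿ`,
`P[‖R − v‖₂ ≤ c√n] ≤ choose(n,⌊n/2⌋)⁻¹·choose(n,⌊2c²n⌋) ≤ (1/2 + ε)^n`. -/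
theorem slice_small_ball_probability
    (ε : ℝ) (hε : 0 < ε) :
    ∃ c₀ : ℝ, 0 < c₀ ∧ ∀ c : ℝ, 0 < c → c ≤ c₀ → ∃ n₀ : ℕ, ∀ n, n₀ ≤ n →
      (∀ v : Fin n → ℝ,
        (((Finset.powersetCard (n/2) (univ : Finset (Fin n))).filter fun s =>
            Real.sqrt (∑ i, ((if i ∈ s then (1:ℝ) else 0) - v i) ^ 2)
              ≤ c * Real.sqrt n).card : ℝ)
          / ((n.choose (n/2) : ℕ) : ℝ)
          ≤ ((n.choose (n/2) : ℕ) : ℝ)⁻¹ * ((n.choose ⌊2 * c^2 * (n:ℝ)⌋₊ : ℕ) : ℝ)) ∧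
      ((n.choose (n/2) : ℕ) : ℝ)⁻¹ * ((n.choose ⌊2 * c^2 * (n:ℝ)⌋₊ : ℕ) : ℝ)
          ≤ (1/2 + ε) ^ n := by
  obtain ⟨κ, hκ, hchoose⟩ := exists_eventually_choose_le_choose_half_mul_pow hε
  refine ⟨√(min (1 / 2 ^ 102) (κ / 2)), by positivity, fun c hc hc₀ => ?_⟩
  have hc2 := le_min_iff.1 ((Real.le_sqrt hc.le (by positivity)).1 hc₀)
  obtain ⟨n₀, hn₀⟩ := eventually_atTop.1
    ((eventually_card_filter_sum_sq_le_le_choose (by positivity) hc2.1).and hchoose)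
  refine ⟨n₀, fun n hn => ?_⟩
  obtain ⟨hball, hcentral⟩ := hn₀ n hn
  have hpos : (0 : ℝ) < n.choose (n / 2) := by
    exact_mod_cast Nat.choose_pos (Nat.div_le_self n 2)
  refine ⟨fun v => ?_, ?_⟩
  · rw [div_eq_inv_mul]
    gcongr
    refine (card_le_card fun s hs => ?_).trans (hball v)
    simp only [mem_filter, mem_univ, true_and] at hs ⊢
    rw [Real.sqrt_le_left (by positivity), mul_pow, Real.sq_sqrt n.cast_nonneg] at hs
    exact hs.2
  · rw [inv_mul_le_iff₀ hpos]
    refine hcentral _ ((Nat.floor_le (by positivity)).trans ?_)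
    nlinarith [hc2.2]
end

section
/- Let y ∈ ℝ^n, μ > 0, λ ∈ ℝ, and let Δ be a probability distribution on {0,1}^n with (b_1,…,b_n) ∼ Δ. Suppose that for all t ≥ √n, P[|Σ b_i y_i − λ| ≤ t] ≤ μt. Then there exist absolute constants c, C > 0 and a vector y' ∈ ℤ^n such that: (R1) ‖y − y'‖_∞ ≤ 1; (R2) P[|Σ b_i y'_i − λ| ≤ t] ≤ Cμt for all t ≥ √n; (R3) sup_z P[|Σ b_i y'_i − z| ≤ √n] ≥ c · sup_z P[|Σ b_i y_i − z| ≤ √n]; (R4) |Σᵢ y_i − Σᵢ y'_i| ≤ C√n. -/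
/-!
Round every `yᵢ` independently, up with probability `Int.fract yᵢ`. The errors `yᵢ - y'ᵢ` are
independent, centred and bounded by `1`, so for every `ω` the change `M = ∑ bᵢ (yᵢ - y'ᵢ)` of
`S = ∑ bᵢ yᵢ` has fourth moment at most `3n²` over the rounding, and so has `∑ (yᵢ - y'ᵢ)`.
By Markov's inequality, with positive probability the rounding satisfies simultaneously:
* `∫ M⁴ / max(√n, |S - λ|/2)³ dμ ≤ 96 μ₀ n`, because `∫ max(√n, |S - λ|/2)⁻³ dμ = O(μ₀ / n)`
  by a dyadic decomposition and the small-ball hypothesis. Where `|S - λ| > 2t` and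
  `|S - M - λ| ≤ t`, `|M|` exceeds both `t` and that scale, so these points have measure
  `O(μ₀ t)`: this gives (R2);
* `|M| ≤ 2√n` on half of a `√n`-ball carrying mass `≥ L(S, √n) / 2`, so `S - M` puts mass
  `≥ L(S, √n) / 4` on a `3√n`-ball, which three `√n`-balls cover: this gives (R3);
* `|∑ (yᵢ - y'ᵢ)| ≤ 2√n`, which is (R4).
-/

open MeasureTheory

namespace RandomizedRounding

section PiExpect

variable {α : Type*} [Fintype α] {n : ℕ}

/-- The expectation of `f` when the coordinates `η i` are independent with laws `p i`. -/
noncomputable def piExpect (p : Fin n → α → ℝ) (f : (Fin n → α) → ℝ) : ℝ :=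
  ∑ η, (∏ i, p i (η i)) * f η

lemma piExpect_succ (p : Fin (n + 1) → α → ℝ) (f : (Fin (n + 1) → α) → ℝ) :
    piExpect p f = ∑ a, p 0 a * piExpect (fun i => p i.succ) (fun η => f (Fin.cons a η)) := by
  simp only [piExpect, Finset.mul_sum]
  rw [← Fintype.sum_prod_type']
  refine Fintype.sum_equiv (Fin.consEquiv fun _ => α).symm _ _ fun η => ?_
  simp [Fin.consEquiv, Fin.prod_univ_succ, Fin.tail, mul_assoc]

lemma piExpect_add_pow (p : Fin n → α → ℝ) (c : ℝ) (f : (Fin n → α) → ℝ) (k : ℕ) :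
    piExpect p (fun η => (c + f η) ^ k) =
      ∑ m ∈ Finset.range (k + 1), c ^ m * piExpect p (fun η => f η ^ (k - m)) * k.choose m := by
  simp only [piExpect, add_pow, Finset.mul_sum, Finset.sum_mul]
  rw [Finset.sum_comm]
  exact Finset.sum_congr rfl fun m _ => Finset.sum_congr rfl fun η _ => by ring

variable {p : Fin n → α → ℝ}

lemma piExpect_const (hp : ∀ i, ∑ a, p i a = 1) (c : ℝ) : piExpect p (fun _ => c) = c := by
  classical
  rw [piExpect, ← Finset.sum_mul, ← Fintype.piFinset_univ, ← Finset.prod_univ_sum]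
  simp [hp]

lemma piExpect_nonneg (hp0 : ∀ i a, 0 ≤ p i a) {f : (Fin n → α) → ℝ} (hf : ∀ η, 0 ≤ f η) :
    0 ≤ piExpect p f :=
  Finset.sum_nonneg fun η _ => mul_nonneg (Finset.prod_nonneg fun i _ => hp0 i (η i)) (hf η)

lemma piExpect_add (f g : (Fin n → α) → ℝ) :
    piExpect p (fun η => f η + g η) = piExpect p f + piExpect p g := by
  simp only [piExpect, mul_add, Finset.sum_add_distrib]

lemma piExpect_mul_const (f : (Fin n → α) → ℝ) (c : ℝ) :
    piExpect p (fun η => f η * c) = piExpect p f * c := by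
  simp only [piExpect, Finset.sum_mul, mul_assoc]

lemma piExpect_const_add (hp : ∀ i, ∑ a, p i a = 1) (c : ℝ) (f : (Fin n → α) → ℝ) :
    piExpect p (fun η => c + f η) = c + piExpect p f := by
  have h := piExpect_const hp c
  simp only [piExpect] at h ⊢
  simp only [mul_add, Finset.sum_add_distrib, h]

lemma exists_le_piExpect (hp : ∀ i, ∑ a, p i a = 1) (hp0 : ∀ i a, 0 ≤ p i a)
    (f : (Fin n → α) → ℝ) : ∃ η, f η ≤ piExpect p f := by
  by_contra! h
  have hzero : ∑ η, (∏ i, p i (η i)) * (f η - piExpect p f) = 0 := by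
    have := piExpect_const hp (piExpect p f)
    simp only [piExpect] at this ⊢
    simp only [mul_sub, Finset.sum_sub_distrib, this, sub_self]
  have hterm := (Finset.sum_eq_zero_iff_of_nonneg fun η _ => mul_nonneg
    (Finset.prod_nonneg fun i _ => hp0 i (η i)) (sub_nonneg.2 (h η).le)).1 hzero
  have hw : ∀ η : Fin n → α, ∏ i, p i (η i) = 0 := fun η =>
    (mul_eq_zero.1 (hterm η (Finset.mem_univ η))).resolve_right (sub_ne_zero.2 (h η).ne')
  have hone := piExpect_const hp 1
  simp only [piExpect, hw, zero_mul, Finset.sum_const_zero] at hone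
  exact zero_ne_one hone

lemma piExpect_ite_le (hp0 : ∀ i a, 0 ≤ p i a) {P : (Fin n → α) → Prop} [DecidablePred P]
    {f : (Fin n → α) → ℝ} {a : ℝ} (ha : 0 < a) (hf : ∀ η, 0 ≤ f η) (hPf : ∀ η, P η → a ≤ f η) :
    piExpect p (fun η => if P η then 1 else 0) ≤ piExpect p f / a := by
  rw [le_div_iff₀ ha, piExpect, Finset.sum_mul]
  refine Finset.sum_le_sum fun η _ => ?_
  rw [mul_assoc]
  refine mul_le_mul_of_nonneg_left ?_ (Finset.prod_nonneg fun i _ => hp0 i (η i))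
  split_ifs with h
  · simpa using hPf η h
  · simpa using hf η

lemma piExpect_ite_lt_abs_le (hp0 : ∀ i a, 0 ≤ p i a) (g : (Fin n → α) → ℝ) {a : ℝ}
    (ha : 0 < a) :
    piExpect p (fun η => if a < |g η| then 1 else 0) ≤ piExpect p (fun η => g η ^ 4) / a ^ 4 :=
  piExpect_ite_le hp0 (by positivity) (fun η => by positivity) fun η h => by
    rw [← Even.pow_abs (by norm_num : Even 4) (g η)]
    exact pow_le_pow_left₀ ha.le h.le 4

lemma piExpect_integral_le {Ω : Type*} [MeasurableSpace Ω] {μ : Measure Ω}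
    {G : (Fin n → α) → Ω → ℝ} {h : Ω → ℝ}
    (hG : ∀ η, Integrable (G η) μ) (hh : Integrable h μ)
    (hGh : ∀ ω, piExpect p (fun η => G η ω) ≤ h ω) :
    piExpect p (fun η => ∫ ω, G η ω ∂μ) ≤ ∫ ω, h ω ∂μ := by
  have hcomm : piExpect p (fun η => ∫ ω, G η ω ∂μ) = ∫ ω, piExpect p (fun η => G η ω) ∂μ := by
    simp only [piExpect]
    rw [integral_finsetSum _ fun η _ => (hG η).const_mul _]
    simp only [integral_const_mul]
  rw [hcomm]
  exact integral_mono (integrable_finsetSum _ fun η _ => (hG η).const_mul _) hh hGh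

end PiExpect

section Moments

variable {α : Type*} {n : ℕ}

lemma sum_cons_apply (X : Fin (n + 1) → α → ℝ) (a : α) (η : Fin n → α) :
    ∑ i, X i ((Fin.cons a η : Fin (n + 1) → α) i) = X 0 a + ∑ i, X i.succ (η i) := by
  simp [Fin.sum_univ_succ]

variable [Fintype α] {p : Fin n → α → ℝ} {X : Fin n → α → ℝ}

lemma sum_mul_pow_le_one {w x : α → ℝ} (hw : ∑ a, w a = 1) (hw0 : ∀ a, 0 ≤ w a)
    (hx : ∀ a, |x a| ≤ 1) (k : ℕ) : ∑ a, w a * x a ^ k ≤ 1 :=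
  calc ∑ a, w a * x a ^ k ≤ ∑ a, w a := Finset.sum_le_sum fun a _ =>
        mul_le_of_le_one_right (hw0 a) ((le_abs_self _).trans (by
          rw [abs_pow]; exact pow_le_one₀ (abs_nonneg _) (hx a)))
    _ = 1 := hw

lemma piExpect_sum_eq_zero (hp : ∀ i, ∑ a, p i a = 1) (hX : ∀ i, ∑ a, p i a * X i a = 0) :
    piExpect p (fun η => ∑ i, X i (η i)) = 0 := by
  induction n with
  | zero => simp [piExpect]
  | succ n ih =>
    simp only [piExpect_succ, sum_cons_apply, piExpect_const_add (fun i => hp i.succ),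
      ih (fun i => hp i.succ) (fun i => hX i.succ), add_zero]
    exact hX 0

lemma piExpect_sq_sum_le (hp : ∀ i, ∑ a, p i a = 1) (hp0 : ∀ i a, 0 ≤ p i a)
    (hX : ∀ i, ∑ a, p i a * X i a = 0) (hX1 : ∀ i a, |X i a| ≤ 1) :
    piExpect p (fun η => (∑ i, X i (η i)) ^ 2) ≤ n := by
  induction n with
  | zero => simp [piExpect]
  | succ n ih =>
    have hp' : ∀ i : Fin n, ∑ a, p i.succ a = 1 := fun i => hp i.succ
    have hX' : ∀ i : Fin n, ∑ a, p i.succ a * X i.succ a = 0 := fun i => hX i.succ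
    have hE₀ : piExpect (fun i => p i.succ) (fun _ => 1) = 1 := piExpect_const hp' 1
    have hE₁ : piExpect (fun i => p i.succ) (fun η => ∑ i, X i.succ (η i)) = 0 :=
      piExpect_sum_eq_zero hp' hX'
    set E₂ := piExpect (fun i => p i.succ) (fun η => (∑ i, X i.succ (η i)) ^ 2)
    have hE₂ : E₂ ≤ n := ih hp' (fun i => hp0 i.succ) hX' (fun i => hX1 i.succ)
    calc piExpect p (fun η => (∑ i, X i (η i)) ^ 2)
        = ∑ a, p 0 a * (X 0 a ^ 2 + E₂) := by
          simp only [piExpect_succ, sum_cons_apply, piExpect_add_pow, Finset.sum_range_succ,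
            Finset.sum_range_zero]
          exact Finset.sum_congr rfl fun a _ => by congr 1; norm_num [E₂, hE₀, hE₁]; ring
      _ = ∑ a, p 0 a * X 0 a ^ 2 + E₂ := by
          simp only [mul_add, Finset.sum_add_distrib, ← Finset.sum_mul, hp 0, one_mul]
      _ ≤ 1 + n := add_le_add (sum_mul_pow_le_one (hp 0) (hp0 0) (hX1 0) 2) hE₂
      _ = (n + 1 : ℕ) := by push_cast; ring

lemma piExpect_pow_four_sum_le (hp : ∀ i, ∑ a, p i a = 1) (hp0 : ∀ i a, 0 ≤ p i a)
    (hX : ∀ i, ∑ a, p i a * X i a = 0) (hX1 : ∀ i a, |X i a| ≤ 1) :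
    piExpect p (fun η => (∑ i, X i (η i)) ^ 4) ≤ 3 * n ^ 2 := by
  induction n with
  | zero => simp [piExpect]
  | succ n ih =>
    have hp' : ∀ i : Fin n, ∑ a, p i.succ a = 1 := fun i => hp i.succ
    have hp0' : ∀ i : Fin n, ∀ a, 0 ≤ p i.succ a := fun i => hp0 i.succ
    have hX' : ∀ i : Fin n, ∑ a, p i.succ a * X i.succ a = 0 := fun i => hX i.succ
    have hE₀ : piExpect (fun i => p i.succ) (fun _ => 1) = 1 := piExpect_const hp' 1
    have hE₁ : piExpect (fun i => p i.succ) (fun η => ∑ i, X i.succ (η i)) = 0 :=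
      piExpect_sum_eq_zero hp' hX'
    have hX1' : ∀ i : Fin n, ∀ a, |X i.succ a| ≤ 1 := fun i => hX1 i.succ
    set E₂ := piExpect (fun i => p i.succ) (fun η => (∑ i, X i.succ (η i)) ^ 2)
    set E₃ := piExpect (fun i => p i.succ) (fun η => (∑ i, X i.succ (η i)) ^ 3)
    set E₄ := piExpect (fun i => p i.succ) (fun η => (∑ i, X i.succ (η i)) ^ 4)
    have hE₂ : E₂ ≤ n := piExpect_sq_sum_le hp' hp0' hX' hX1'
    have hE₄ : E₄ ≤ 3 * n ^ 2 := ih hp' hp0' hX' hX1'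
    -- in `(X₀ + S')⁴`, `4 X₀³ S'` averages out as `𝔼 S' = 0` and `4 X₀ S'³` as `𝔼 X₀ = 0`
    calc piExpect p (fun η => (∑ i, X i (η i)) ^ 4)
        = ∑ a, p 0 a * (X 0 a ^ 4 + 6 * X 0 a ^ 2 * E₂ + 4 * X 0 a * E₃ + E₄) := by
          simp only [piExpect_succ, sum_cons_apply, piExpect_add_pow, Finset.sum_range_succ,
            Finset.sum_range_zero]
          exact Finset.sum_congr rfl fun a _ => by
            congr 1
            norm_num [E₂, E₃, E₄, hE₀, hE₁, Nat.choose]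
            ring
      _ = ∑ a, p 0 a * X 0 a ^ 4 + 6 * (∑ a, p 0 a * X 0 a ^ 2) * E₂
            + 4 * (∑ a, p 0 a * X 0 a) * E₃ + E₄ * ∑ a, p 0 a := by
          simp only [Finset.mul_sum, Finset.sum_mul, ← Finset.sum_add_distrib]
          exact Finset.sum_congr rfl fun a _ => by ring
      _ ≤ 3 * ((n + 1 : ℕ) : ℝ) ^ 2 := by
          have h₄ := sum_mul_pow_le_one (hp 0) (hp0 0) (hX1 0) 4
          have h₂ := sum_mul_pow_le_one (hp 0) (hp0 0) (hX1 0) 2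
          have hE₂0 : 0 ≤ E₂ := piExpect_nonneg hp0' fun η => sq_nonneg _
          rw [hX 0, hp 0]
          push_cast
          nlinarith

end Moments

section Rounding

/-- `x` rounded down (`false`) or up (`true`). -/
noncomputable def roundBool (x : ℝ) (v : Bool) : ℤ := ⌊x⌋ + if v then 1 else 0

/-- The law of randomized rounding, which rounds `x` up with probability `Int.fract x`. -/
noncomputable def roundLaw (x : ℝ) (v : Bool) : ℝ := if v then Int.fract x else 1 - Int.fract x

lemma roundLaw_nonneg (x : ℝ) (v : Bool) : 0 ≤ roundLaw x v := by
  cases v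
  · simpa [roundLaw] using (Int.fract_lt_one x).le
  · exact Int.fract_nonneg x

lemma sum_roundLaw (x : ℝ) : ∑ v, roundLaw x v = 1 := by
  simp [roundLaw]

lemma sub_roundBool (x : ℝ) (v : Bool) : x - roundBool x v = Int.fract x - if v then 1 else 0 := by
  cases v <;> simp [roundBool, ← Int.self_sub_floor]; ring

lemma abs_sub_roundBool_le_one (x : ℝ) (v : Bool) : |x - roundBool x v| ≤ 1 := by
  rw [sub_roundBool, abs_le]
  have := Int.fract_nonneg x
  have := Int.fract_lt_one x
  cases v <;> constructor <;> simp <;> linarith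

lemma sum_roundLaw_mul_sub_roundBool (x : ℝ) : ∑ v, roundLaw x v * (x - roundBool x v) = 0 := by
  simp [roundLaw, sub_roundBool]
  ring

lemma piExpect_roundLaw_pow_four_le {n : ℕ} (y c : Fin n → ℝ) (hc : ∀ i, |c i| ≤ 1) :
    piExpect (fun i => roundLaw (y i)) (fun η => (∑ i, c i * (y i - roundBool (y i) (η i))) ^ 4)
      ≤ 3 * n ^ 2 :=
  piExpect_pow_four_sum_le (X := fun i v => c i * (y i - roundBool (y i) v))
    (fun i => sum_roundLaw (y i)) (fun i => roundLaw_nonneg (y i))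
    (fun i => by simp only [mul_left_comm _ (c i), ← Finset.mul_sum,
      sum_roundLaw_mul_sub_roundBool, mul_zero])
    (fun i v => by
      rw [abs_mul]
      exact mul_le_one₀ (hc i) (abs_nonneg _) (abs_sub_roundBool_le_one _ _))

lemma piExpect_roundLaw_ite_lt_abs_le {n : ℕ} (hn : 0 < n) (y c : Fin n → ℝ) (hc : ∀ i, |c i| ≤ 1) :
    piExpect (fun i => roundLaw (y i))
      (fun η => if 2 * √n < |∑ i, c i * (y i - roundBool (y i) (η i))| then 1 else 0) ≤ 3 / 16 :=
  calc _ ≤ piExpect (fun i => roundLaw (y i))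
        (fun η => (∑ i, c i * (y i - roundBool (y i) (η i))) ^ 4) / (2 * √n) ^ 4 :=
        piExpect_ite_lt_abs_le (fun i => roundLaw_nonneg (y i)) _ (by positivity)
    _ ≤ 3 * n ^ 2 / (2 * √n) ^ 4 := by gcongr; exact piExpect_roundLaw_pow_four_le y c hc
    _ = 3 / 16 := by
        rw [mul_pow, show √(n : ℝ) ^ 4 = (√n ^ 2) ^ 2 by ring, Real.sq_sqrt (Nat.cast_nonneg n)]
        field_simp
        norm_num

end Rounding

section SmallBall

variable {Ω : Type*} [MeasurableSpace Ω] {μ : Measure Ω} [IsFiniteMeasure μ]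

lemma integrable_inv_max_pow_three {X : Ω → ℝ} (hX : Measurable X) {r : ℝ} (hr : 0 < r) :
    Integrable (fun ω => (max r (X ω) ^ 3)⁻¹) μ := by
  refine Integrable.of_bound (by fun_prop) (r ^ 3)⁻¹ (Filter.Eventually.of_forall fun ω => ?_)
  rw [Real.norm_eq_abs, abs_of_pos (by positivity)]
  gcongr
  exact le_max_left _ _

lemma integral_inv_max_pow_three_le {X : Ω → ℝ} (hX : Measurable X) {r K : ℝ} (hr : 0 < r)
    (hK : ∀ t, r ≤ t → μ.real {ω | X ω ≤ t} ≤ K * t) :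
    ∫ ω, (max r (X ω) ^ 3)⁻¹ ∂μ ≤ 4 * K / r ^ 2 := by
  have hK0 : 0 ≤ K := nonneg_of_mul_nonneg_left (measureReal_nonneg.trans (hK r le_rfl)) hr
  set B : ℕ → Set Ω := fun j => {ω | X ω ≤ 2 ^ (j + 1) * r}
  have hB : ∀ j, MeasurableSet (B j) := fun j => measurableSet_le hX measurable_const
  -- dyadic decomposition: `2ʲ r ≤ max r (X ω) < 2ʲ⁺¹ r` for some `j`
  have hpt : ∀ ω, ENNReal.ofReal (max r (X ω) ^ 3)⁻¹ ≤
      ∑' j, (B j).indicator (fun _ => ENNReal.ofReal ((2 ^ j * r) ^ 3)⁻¹) ω := by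
    intro ω
    obtain ⟨j, hj, hj'⟩ := exists_nat_pow_near ((one_le_div hr).2 (le_max_left r (X ω)))
      one_lt_two
    refine le_trans ?_ (ENNReal.le_tsum j)
    rw [Set.indicator_of_mem (show ω ∈ B j from
      (le_max_right r (X ω)).trans ((div_lt_iff₀ hr).1 hj').le)]
    gcongr
    exact (le_div_iff₀ hr).1 hj
  have hshell : ∀ j : ℕ, ENNReal.ofReal ((2 ^ j * r) ^ 3)⁻¹ * μ (B j) ≤
      ENNReal.ofReal (2 * K / r ^ 2 * (1 / 4) ^ j) := by
    intro j
    calc ENNReal.ofReal ((2 ^ j * r) ^ 3)⁻¹ * μ (B j)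
        ≤ ENNReal.ofReal ((2 ^ j * r) ^ 3)⁻¹ * ENNReal.ofReal (K * (2 ^ (j + 1) * r)) := by
          gcongr
          rw [← ofReal_measureReal]
          exact ENNReal.ofReal_le_ofReal
            (hK _ (le_mul_of_one_le_left hr.le (one_le_pow₀ one_le_two)))
      _ = ENNReal.ofReal (2 * K / r ^ 2 * (1 / 4) ^ j) := by
          rw [← ENNReal.ofReal_mul (by positivity)]
          congr 1
          rw [one_div, inv_pow, show (4 : ℝ) = 2 ^ 2 by norm_num, ← pow_mul]
          field_simp
          ring
  have hsum : Summable fun j : ℕ => 2 * K / r ^ 2 * (1 / 4 : ℝ) ^ j :=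
    (summable_geometric_of_lt_one (by norm_num) (by norm_num)).mul_left _
  rw [integral_eq_lintegral_of_nonneg_ae (Filter.Eventually.of_forall fun ω => by positivity)
    (by fun_prop)]
  refine ENNReal.toReal_le_of_le_ofReal (by positivity) ?_
  calc ∫⁻ ω, ENNReal.ofReal (max r (X ω) ^ 3)⁻¹ ∂μ
      ≤ ∫⁻ ω, ∑' j, (B j).indicator (fun _ => ENNReal.ofReal ((2 ^ j * r) ^ 3)⁻¹) ω ∂μ :=
        lintegral_mono hpt
    _ = ∑' j, ENNReal.ofReal ((2 ^ j * r) ^ 3)⁻¹ * μ (B j) := by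
        rw [lintegral_tsum fun j => (measurable_const.indicator (hB j)).aemeasurable]
        exact tsum_congr fun j => lintegral_indicator_const (hB j) _
    _ ≤ ∑' j : ℕ, ENNReal.ofReal (2 * K / r ^ 2 * (1 / 4) ^ j) := ENNReal.tsum_le_tsum hshell
    _ = ENNReal.ofReal (2 * K / r ^ 2 * (4 / 3)) := by
        rw [← ENNReal.ofReal_tsum_of_nonneg (fun j => by positivity) hsum, tsum_mul_left,
          tsum_geometric_of_lt_one (by norm_num) (by norm_num)]
        norm_num
    _ ≤ ENNReal.ofReal (4 * K / r ^ 2) := by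
        rw [show 2 * K / r ^ 2 * (4 / 3) = 8 / 3 * (K / r ^ 2) by ring,
          show 4 * K / r ^ 2 = 4 * (K / r ^ 2) by ring]
        gcongr
        norm_num

end SmallBall

section LevyConcentration

variable {Ω : Type*} [MeasurableSpace Ω] (μ : Measure Ω)

/-- The Lévy concentration function `L(X, r) = sup_z P[|X - z| ≤ r]`. -/
noncomputable def levyConc (X : Ω → ℝ) (r : ℝ) : ℝ :=
  ⨆ z, μ.real {ω | |X ω - z| ≤ r}

lemma measureReal_le_levyConc [IsFiniteMeasure μ] (X : Ω → ℝ) (r z : ℝ) :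
    μ.real {ω | |X ω - z| ≤ r} ≤ levyConc μ X r :=
  le_ciSup (f := fun z => μ.real {ω | |X ω - z| ≤ r})
    ⟨μ.real Set.univ, by rintro _ ⟨z, rfl⟩; exact measureReal_mono (Set.subset_univ _)⟩ z

lemma exists_half_levyConc_le (X : Ω → ℝ) (r : ℝ) :
    ∃ z, levyConc μ X r / 2 ≤ μ.real {ω | |X ω - z| ≤ r} := by
  by_cases h : levyConc μ X r ≤ 0
  · exact ⟨0, (div_nonpos_of_nonpos_of_nonneg h zero_le_two).trans measureReal_nonneg⟩
  · obtain ⟨z, hz⟩ := exists_lt_of_lt_ciSup (half_lt_self (not_le.1 h))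
    exact ⟨z, hz.le⟩

lemma measureReal_abs_sub_le_three_mul_le_levyConc [IsFiniteMeasure μ] (X : Ω → ℝ) (r z : ℝ) :
    μ.real {ω | |X ω - z| ≤ 3 * r} ≤ 3 * levyConc μ X r := by
  have hcover : {ω | |X ω - z| ≤ 3 * r} ⊆ {ω | |X ω - (z - 2 * r)| ≤ r} ∪
      {ω | |X ω - z| ≤ r} ∪ {ω | |X ω - (z + 2 * r)| ≤ r} := by
    intro ω hω
    simp only [Set.mem_ofPred_eq, Set.mem_union, abs_le] at hω ⊢
    by_cases h₁ : X ω - z < -r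
    · exact Or.inl (Or.inl ⟨by linarith, by linarith⟩)
    by_cases h₂ : X ω - z ≤ r
    · exact Or.inl (Or.inr ⟨by linarith, h₂⟩)
    · exact Or.inr ⟨by linarith, by linarith⟩
  calc μ.real {ω | |X ω - z| ≤ 3 * r}
      ≤ μ.real {ω | |X ω - (z - 2 * r)| ≤ r} + μ.real {ω | |X ω - z| ≤ r}
          + μ.real {ω | |X ω - (z + 2 * r)| ≤ r} :=
        (measureReal_mono hcover).trans ((measureReal_union_le _ _).trans
          (add_le_add_left (measureReal_union_le _ _) _))
    _ ≤ 3 * levyConc μ X r := by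
        linarith [measureReal_le_levyConc μ X r (z - 2 * r), measureReal_le_levyConc μ X r z,
          measureReal_le_levyConc μ X r (z + 2 * r)]

end LevyConcentration

section Deviation

variable {Ω : Type*} [MeasurableSpace Ω] {μ : Measure Ω} [IsFiniteMeasure μ]

lemma le_pow_four_div_pow_three {m s : ℝ} (hs : 0 < s) (hsm : s ≤ |m|) : |m| ≤ m ^ 4 / s ^ 3 := by
  rw [le_div_iff₀ (by positivity), ← Even.pow_abs (by norm_num : Even 4) m]
  calc |m| * s ^ 3 ≤ |m| * |m| ^ 3 := by gcongr
    _ = |m| ^ 4 := by ring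

lemma measureReal_abs_sub_sub_le {S M : Ω → ℝ} {r μ₀ A lam t : ℝ} (hr : 0 < r) (hrt : r ≤ t)
    (hS_ball : ∀ t, r ≤ t → μ.real {ω | |S ω - lam| ≤ t} ≤ μ₀ * t)
    (hint : Integrable (fun ω => M ω ^ 4 / max r (|S ω - lam| / 2) ^ 3) μ)
    (hW : ∫ ω, M ω ^ 4 / max r (|S ω - lam| / 2) ^ 3 ∂μ ≤ A * r ^ 2) :
    μ.real {ω | |S ω - M ω - lam| ≤ t} ≤ (2 * μ₀ + A) * t := by
  set F := fun ω => M ω ^ 4 / max r (|S ω - lam| / 2) ^ 3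
  have ht : 0 < t := hr.trans_le hrt
  have hscale : ∀ ω, 0 < max r (|S ω - lam| / 2) := fun ω => hr.trans_le (le_max_left _ _)
  have hF : ∀ ω, 0 ≤ F ω := fun ω => div_nonneg (by positivity) (pow_pos (hscale ω) 3).le
  have hsub : {ω | |S ω - M ω - lam| ≤ t} ⊆ {ω | |S ω - lam| ≤ 2 * t} ∪ {ω | t ≤ F ω} := by
    intro ω hω
    by_cases hnear : |S ω - lam| ≤ 2 * t
    · exact Or.inl hnear
    -- far from `lam`, `M` dominates the scale `max r (|S - lam| / 2)`, so `F ≥ |M| > t`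
    refine Or.inr (?_ : t ≤ F ω)
    have hM : |S ω - lam| - t ≤ |M ω| := by
      have := abs_sub_abs_le_abs_sub (S ω - lam) (S ω - M ω - lam)
      simp only [Set.mem_ofPred_eq] at hω
      rw [show S ω - lam - (S ω - M ω - lam) = M ω by ring] at this
      linarith
    have hsM : max r (|S ω - lam| / 2) ≤ |M ω| := max_le (by linarith) (by linarith)
    exact (by linarith : t ≤ |M ω|).trans (le_pow_four_div_pow_three (hscale ω) hsM)
  have hA : 0 ≤ A := nonneg_of_mul_nonneg_left ((integral_nonneg hF).trans hW) (by positivity)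
  have hMarkov : t * μ.real {ω | t ≤ F ω} ≤ A * r ^ 2 :=
    (mul_meas_ge_le_integral_of_nonneg (Filter.Eventually.of_forall hF) hint t).trans hW
  calc μ.real {ω | |S ω - M ω - lam| ≤ t}
      ≤ μ.real {ω | |S ω - lam| ≤ 2 * t} + μ.real {ω | t ≤ F ω} :=
        (measureReal_mono hsub).trans (measureReal_union_le _ _)
    _ ≤ μ₀ * (2 * t) + A * t := by
        gcongr
        · exact hS_ball _ (by linarith)
        · rw [← mul_le_mul_iff_of_pos_left ht]
          nlinarith [mul_le_mul_of_nonneg_left (pow_le_pow_left₀ hr.le hrt 2) hA]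
    _ = (2 * μ₀ + A) * t := by ring

lemma measureReal_abs_sub_le_levyConc_sub {S M : Ω → ℝ} (hM : Measurable M) {r z : ℝ}
    (hgood : μ.real ({ω | |S ω - z| ≤ r} ∩ {ω | 2 * r < |M ω|}) ≤ μ.real {ω | |S ω - z| ≤ r} / 2) :
    μ.real {ω | |S ω - z| ≤ r} / 6 ≤ levyConc μ (fun ω => S ω - M ω) r := by
  set D := {ω | |S ω - z| ≤ r}
  have hsplit := measureReal_inter_add_sdiff (μ := μ) (s := D)
    (measurableSet_lt (f := fun _ => 2 * r) measurable_const hM.abs)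
  have hsub : D \ {ω | 2 * r < |M ω|} ⊆ {ω | |S ω - M ω - z| ≤ 3 * r} := by
    rintro ω ⟨hD, hM⟩
    simp only [D, Set.mem_ofPred_eq, not_lt] at hD hM ⊢
    calc |S ω - M ω - z| = |(S ω - z) + -M ω| := by ring_nf
      _ ≤ |S ω - z| + |M ω| := by rw [← abs_neg (M ω)]; exact abs_add_le _ _
      _ ≤ 3 * r := by linarith
  have := measureReal_abs_sub_le_three_mul_le_levyConc μ (fun ω => S ω - M ω) r z
  linarith [measureReal_mono (μ := μ) hsub]

end Deviation

section GoodRounding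

variable {Ω : Type*} {n : ℕ} {b : Fin n → Ω → ℝ} {y : Fin n → ℝ}

/-- The change `∑ bᵢ (yᵢ - y'ᵢ)` of the weighted sum under the rounding `η`. -/
noncomputable def roundNoise (b : Fin n → Ω → ℝ) (y : Fin n → ℝ) (η : Fin n → Bool) (ω : Ω) :
    ℝ :=
  ∑ i, b i ω * (y i - roundBool (y i) (η i))

lemma sum_mul_roundBool (b : Fin n → Ω → ℝ) (y : Fin n → ℝ) (η : Fin n → Bool) (ω : Ω) :
    ∑ i, b i ω * (roundBool (y i) (η i) : ℝ) = ∑ i, b i ω * y i - roundNoise b y η ω := by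
  simp only [roundNoise, mul_sub, Finset.sum_sub_distrib, sub_sub_cancel]

lemma abs_roundNoise_le (hb : ∀ i ω, |b i ω| ≤ 1) (η : Fin n → Bool) (ω : Ω) :
    |roundNoise b y η ω| ≤ n :=
  calc |roundNoise b y η ω| ≤ ∑ i, |b i ω * (y i - roundBool (y i) (η i))| :=
        Finset.abs_sum_le_sum_abs _ _
    _ ≤ ∑ _ : Fin n, (1 : ℝ) := Finset.sum_le_sum fun i _ => by
        rw [abs_mul]
        exact mul_le_one₀ (hb i ω) (abs_nonneg _) (abs_sub_roundBool_le_one _ _)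
    _ = n := by simp

variable [MeasurableSpace Ω] {μ : Measure Ω} [IsFiniteMeasure μ]

lemma measurable_roundNoise (hb : ∀ i, Measurable (b i)) (η : Fin n → Bool) :
    Measurable (roundNoise b y η) :=
  Finset.measurable_sum _ fun i _ => (hb i).mul_const _

lemma integrable_roundNoise_pow_four_div (hb_meas : ∀ i, Measurable (b i))
    (hb : ∀ i ω, |b i ω| ≤ 1) {X : Ω → ℝ} (hX : Measurable X) {r : ℝ} (hr : 0 < r)
    (η : Fin n → Bool) :
    Integrable (fun ω => roundNoise b y η ω ^ 4 / max r (X ω) ^ 3) μ := by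
  simp only [div_eq_mul_inv]
  refine (integrable_inv_max_pow_three hX hr).bdd_mul (c := (n : ℝ) ^ 4)
    ((measurable_roundNoise hb_meas η).pow_const 4).aestronglyMeasurable
    (Filter.Eventually.of_forall fun ω => ?_)
  rw [Real.norm_eq_abs, abs_pow]
  exact pow_le_pow_left₀ (abs_nonneg _) (abs_roundNoise_le hb η ω) 4

lemma piExpect_integral_roundNoise_le (hn : 0 < n) (hb_meas : ∀ i, Measurable (b i))
    (hb : ∀ i ω, |b i ω| ≤ 1) {μ₀ lam : ℝ}
    (hS_ball : ∀ t, √n ≤ t → μ.real {ω | |∑ i, b i ω * y i - lam| ≤ t} ≤ μ₀ * t) :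
    piExpect (fun i => roundLaw (y i)) (fun η => ∫ ω, roundNoise b y η ω ^ 4 /
      max √n (|∑ i, b i ω * y i - lam| / 2) ^ 3 ∂μ) ≤ 24 * μ₀ * n := by
  have hr : 0 < √(n : ℝ) := Real.sqrt_pos.2 (Nat.cast_pos.2 hn)
  have hX : Measurable fun ω => |∑ i, b i ω * y i - lam| / 2 :=
    (((Finset.measurable_sum _ fun i _ => (hb_meas i).mul_const _).sub_const _).abs).div_const _
  have hX_ball : ∀ t, √n ≤ t → μ.real {ω | |∑ i, b i ω * y i - lam| / 2 ≤ t} ≤ 2 * μ₀ * t :=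
    fun t ht => by
      simp only [div_le_iff₀ (two_pos (α := ℝ)), mul_comm t 2]
      linarith [hS_ball (2 * t) (by linarith)]
  calc _ ≤ ∫ ω, 3 * n ^ 2 * (max √n (|∑ i, b i ω * y i - lam| / 2) ^ 3)⁻¹ ∂μ :=
        piExpect_integral_le (fun η => integrable_roundNoise_pow_four_div hb_meas hb hX hr η)
          ((integrable_inv_max_pow_three hX hr).const_mul _) fun ω => by
            simp only [div_eq_mul_inv, piExpect_mul_const]
            gcongr
            exact piExpect_roundLaw_pow_four_le y (fun i => b i ω) (fun i => hb i ω)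
    _ = 3 * n ^ 2 * ∫ ω, (max √n (|∑ i, b i ω * y i - lam| / 2) ^ 3)⁻¹ ∂μ :=
        integral_const_mul _ _
    _ ≤ 3 * n ^ 2 * (4 * (2 * μ₀) / √n ^ 2) := by
        gcongr
        exact integral_inv_max_pow_three_le hX hr hX_ball
    _ = 24 * μ₀ * n := by
        rw [Real.sq_sqrt (Nat.cast_nonneg n)]
        field_simp
        ring

lemma piExpect_measureReal_inter_le (hn : 0 < n) (hb_meas : ∀ i, Measurable (b i))
    (hb : ∀ i ω, |b i ω| ≤ 1) {D : Set Ω} (hD : MeasurableSet D) :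
    piExpect (fun i => roundLaw (y i))
      (fun η => μ.real (D ∩ {ω | 2 * √n < |roundNoise b y η ω|})) ≤ 3 / 16 * μ.real D := by
  have hB : ∀ η, MeasurableSet (D ∩ {ω | 2 * √n < |roundNoise b y η ω|}) := fun η =>
    hD.inter (measurableSet_lt measurable_const (measurable_roundNoise hb_meas η).abs)
  simp only [← integral_indicator_one (hB _), ← integral_indicator_one hD, ← integral_const_mul]
  refine piExpect_integral_le (fun η => (integrable_const 1).indicator (hB η))
    (((integrable_const 1).indicator hD).const_mul _) fun ω => ?_
  by_cases hω : ω ∈ D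
  · simpa [Set.indicator, hω, roundNoise] using
      piExpect_roundLaw_ite_lt_abs_le hn y (fun i => b i ω) (fun i => hb i ω)
  · simp [Set.indicator, hω, piExpect]

lemma exists_good_rounding (hn : 0 < n) (hb_meas : ∀ i, Measurable (b i))
    (hb : ∀ i ω, |b i ω| ≤ 1) {μ₀ lam : ℝ} (hμ₀ : 0 < μ₀)
    (hS_ball : ∀ t, √n ≤ t → μ.real {ω | |∑ i, b i ω * y i - lam| ≤ t} ≤ μ₀ * t) (z : ℝ) :
    ∃ η : Fin n → Bool,
      ∫ ω, roundNoise b y η ω ^ 4 / max √n (|∑ i, b i ω * y i - lam| / 2) ^ 3 ∂μ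
        ≤ 96 * μ₀ * n ∧
      μ.real ({ω | |∑ i, b i ω * y i - z| ≤ √n} ∩ {ω | 2 * √n < |roundNoise b y η ω|})
        ≤ μ.real {ω | |∑ i, b i ω * y i - z| ≤ √n} / 2 ∧
      |∑ i, (y i - roundBool (y i) (η i))| ≤ 2 * √n := by
  set p := fun i => roundLaw (y i)
  have hp : ∀ i, ∑ v, p i v = 1 := fun i => sum_roundLaw (y i)
  have hp0 : ∀ i v, 0 ≤ p i v := fun i => roundLaw_nonneg (y i)
  set W := fun η => ∫ ω, roundNoise b y η ω ^ 4 / max √n (|∑ i, b i ω * y i - lam| / 2) ^ 3 ∂μ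
  set D := {ω | |∑ i, b i ω * y i - z| ≤ √n}
  set E := fun η => μ.real (D ∩ {ω | 2 * √n < |roundNoise b y η ω|})
  -- the three Markov bounds below add up to `1 / 4 + 3 / 8 + 3 / 16 < 1`
  have h₁ : piExpect p (fun η => if 96 * μ₀ * n < W η then 1 else 0) ≤ 1 / 4 := by
    refine (piExpect_ite_le hp0 (by positivity) (fun η => integral_nonneg fun ω => ?_)
      fun η h => h.le).trans ?_
    · exact div_nonneg (by positivity) (pow_nonneg ((Real.sqrt_nonneg _).trans (le_max_left _ _)) _)
    · rw [div_le_iff₀ (by positivity)]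
      linarith [piExpect_integral_roundNoise_le (μ := μ) hn hb_meas hb hS_ball]
  have h₂ : piExpect p (fun η => if μ.real D / 2 < E η then 1 else 0) ≤ 3 / 8 := by
    rcases measureReal_nonneg.eq_or_lt with hD | hD
    · have hE : ∀ η, ¬ μ.real D / 2 < E η := fun η =>
        not_lt.2 ((measureReal_mono Set.inter_subset_left).trans (by rw [← hD]; simp))
      simp only [hE, if_false, piExpect_const hp]
      norm_num
    · refine (piExpect_ite_le hp0 (by positivity) (fun _ => measureReal_nonneg)
        fun η h => h.le).trans ?_
      rw [div_le_iff₀ (by positivity)]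
      linarith [piExpect_measureReal_inter_le (μ := μ) hn hb_meas hb (y := y)
        (measurableSet_le (by fun_prop) measurable_const : MeasurableSet D)]
  have h₃ : piExpect p (fun η => if 2 * √n < |∑ i, (y i - roundBool (y i) (η i))| then 1 else 0)
      ≤ 3 / 16 := by
    simpa using piExpect_roundLaw_ite_lt_abs_le hn y 1 (by simp)
  obtain ⟨η, hη⟩ := exists_le_piExpect hp hp0 fun η =>
    (if 96 * μ₀ * n < W η then 1 else 0) + (if μ.real D / 2 < E η then 1 else 0) +
      (if 2 * √n < |∑ i, (y i - roundBool (y i) (η i))| then 1 else 0)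
  simp only [piExpect_add] at hη
  refine ⟨η, not_lt.1 fun h => ?_, not_lt.1 fun h => ?_, not_lt.1 fun h => ?_⟩ <;>
    split_ifs at hη <;> linarith

end GoodRounding

end RandomizedRounding

open RandomizedRounding

/-- randomized rounding: There are absolute constants
`c, C > 0` such that for any distribution `Δ` on `{0,1}^n`, any `y ∈ ℝⁿ`,
`μ₀ > 0`, `λ ∈ ℝ` with `P[|Σ bᵢyᵢ − λ| ≤ t] ≤ μ₀ t` for all `t ≥ √n`, there is
`y' ∈ ℤⁿ` with (R1) `‖y − y'‖_∞ ≤ 1`; (R2) `P[|Σ bᵢy'ᵢ − λ| ≤ t] ≤ C μ₀ t` for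
`t ≥ √n`; (R3) `L(Σ bᵢy'ᵢ, √n) ≥ c·L(Σ bᵢyᵢ, √n)`; (R4) `|Σ yᵢ − Σ y'ᵢ| ≤ C√n`. -/
theorem randomized_rounding :
    ∃ c C : ℝ, 0 < c ∧ 0 < C ∧
    ∀ (n : ℕ) (Ω : Type) (mΩ : MeasurableSpace Ω) (μ : Measure Ω),
      IsProbabilityMeasure μ →
    ∀ (b : Fin n → Ω → ℝ), (∀ i, Measurable (b i)) →
      (∀ i ω, b i ω = 0 ∨ b i ω = 1) →
    ∀ (y : Fin n → ℝ) (μ₀ lam : ℝ), 0 < μ₀ →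
      (∀ t : ℝ, Real.sqrt n ≤ t →
        (μ {ω | |(∑ i, b i ω * y i) - lam| ≤ t}).toReal ≤ μ₀ * t) →
    ∃ y' : Fin n → ℤ,
      (∀ i, |y i - (y' i : ℝ)| ≤ 1) ∧
      (∀ t : ℝ, Real.sqrt n ≤ t →
        (μ {ω | |(∑ i, b i ω * (y' i : ℝ)) - lam| ≤ t}).toReal ≤ C * μ₀ * t) ∧
      (c * ⨆ z : ℝ, (μ {ω | |(∑ i, b i ω * y i) - z| ≤ Real.sqrt n}).toReal
        ≤ ⨆ z : ℝ, (μ {ω | |(∑ i, b i ω * (y' i : ℝ)) - z| ≤ Real.sqrt n}).toReal) ∧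
      (|(∑ i, y i) - ∑ i, (y' i : ℝ)| ≤ C * Real.sqrt n) := by
  refine ⟨1 / 12, 100, by norm_num, by norm_num,
    fun n Ω _ μ _ b hb_meas hb01 y μ₀ lam hμ₀ hS_ball => ?_⟩
  rcases n.eq_zero_or_pos with rfl | hn
  · refine ⟨0, fun i => i.elim0, fun t ht => ?_, ?_, by simp⟩
    · have ht0 : 0 ≤ t := by simpa using ht
      have := hS_ball t ht
      simp only [Finset.univ_eq_empty, Finset.sum_empty] at this ⊢
      nlinarith
    · simp only [Finset.univ_eq_empty, Finset.sum_empty]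
      exact mul_le_of_le_one_left (Real.iSup_nonneg fun _ => ENNReal.toReal_nonneg) (by norm_num)
  have hb : ∀ i ω, |b i ω| ≤ 1 := fun i ω => by rcases hb01 i ω with h | h <;> simp [h]
  have hr : 0 < √(n : ℝ) := Real.sqrt_pos.2 (Nat.cast_pos.2 hn)
  set S := fun ω => ∑ i, b i ω * y i
  obtain ⟨z, hz⟩ := exists_half_levyConc_le μ S √n
  obtain ⟨η, hW, hgood, hsum⟩ := exists_good_rounding (μ := μ) hn hb_meas hb hμ₀ hS_ball z
  refine ⟨fun i => roundBool (y i) (η i), fun i => abs_sub_roundBool_le_one _ _,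
    fun t ht => ?_, ?_, ?_⟩ <;> simp only [sum_mul_roundBool]
  · refine (measureReal_abs_sub_sub_le hr ht hS_ball
      (integrable_roundNoise_pow_four_div hb_meas hb (by fun_prop) hr η) (A := 96 * μ₀) ?_).trans ?_
    · rwa [Real.sq_sqrt (Nat.cast_nonneg n)]
    · nlinarith
  · have := measureReal_abs_sub_le_levyConc_sub (measurable_roundNoise hb_meas η) hgood
    exact (by linarith : 1 / 12 * levyConc μ S √n ≤ _).trans this
  · rw [← Finset.sum_sub_distrib]
    linarith
end
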